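/- Let P(θ) = 𝔄(θ) sin θ + 𝔅 cos θ with 𝔄(0) anti-diagonal data so that P(0) = 𝔅, and let U(θ) = [[cos θ · Id - 𝔅*𝔄(θ) sin θ, 0],[0, Id]] with respect to the ±i-eigenspace decomposition of γ. If 𝔄(θ), 𝔅 are unitary, 𝔄(θ)² = Id, 𝔅² = -Id, 𝔄(θ)𝔅 = 𝔅𝔄(θ), and both anticommute with γ = diag(i,-i), then U(θ) P̃(0) U(θ)* = P̃(θ), where P̃(θ) = (1/2)[[Id, P(θ)*],[P(θ), Id]]. -/

import Mathlib

/-!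
Write `Π₊ = (1 - iγ)/2`, so `Π₋ = 1 - Π₊`; an operator anticommuting with `γ` swaps `Π₊` and `Π₋`.
Then `2 P̃(0) = 1 + 𝔅 Π₊ + 𝔅* Π₋`, and conjugating `1 + X Π₊ + Y Π₋` (with `X`, `Y` swapping the
eigenprojections) by the block-diagonal `V Π₊ + Π₋`, `V` unitary and commuting with `γ`, gives
`1 + X V* Π₊ + V Y Π₋`. Here `V = cos θ - sin θ 𝔅*𝔄 = exp (-θ 𝔅*𝔄)`, because `(𝔅*𝔄)² = -1`, and
`𝔅 V* = 𝔄 sin θ + 𝔅 cos θ = P(θ)`, `V 𝔅* = P(θ)*`.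
-/

section Ring

variable {R : Type*} [Ring R] {p V V' X Y : R}

theorem blockDiag_conj_graph (hp : IsIdempotentElem p) (hV' : Commute V' p) (hVV' : V * V' = 1)
    (hX : X * p = (1 - p) * X) (hY : Y * p = (1 - p) * Y) :
    (V * p + (1 - p)) * (1 + X * p + Y * (1 - p)) * (V' * p + (1 - p)) =
      1 + X * V' * p + V * Y * (1 - p) := by
  have hq := hp.one_sub
  replace hY : Y * (1 - p) = p * Y := by rw [mul_sub, mul_one, hY, sub_mul, one_mul, sub_sub_cancel]
  have hUp : (V * p + (1 - p)) * p = V * p := by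
    rw [add_mul, hp.mul_mul_self, hp.one_sub_mul_self, add_zero]
  have hUq : (V * p + (1 - p)) * (1 - p) = 1 - p := by
    rw [add_mul, mul_assoc, hp.mul_one_sub_self, mul_zero, zero_add, hq.eq]
  have hpU' : p * (V' * p + (1 - p)) = V' * p := by
    rw [mul_add, hV'.eq, hp.mul_self_mul, hp.mul_one_sub_self, add_zero]
  have hqU' : (1 - p) * (V' * p + (1 - p)) = 1 - p := by
    rw [mul_add, hV'.eq, ← mul_assoc, hp.one_sub_mul_self, zero_mul, zero_add, hq.eq]
  generalize V * p + (1 - p) = U at hUp hUq ⊢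
  generalize V' * p + (1 - p) = U' at hpU' hqU' ⊢
  have hUU' : U * U' = 1 :=
    calc U * U' = U * p * V' + U * (1 - p) := by
          rw [mul_assoc, ← hV'.eq, ← hpU', ← hqU', ← mul_add, ← add_mul, add_sub_cancel, one_mul]
      _ = 1 := by rw [hUp, hUq, mul_assoc, ← hV'.eq, ← mul_assoc, hVV', one_mul, add_sub_cancel]
  have hXp : U * (X * p) * U' = X * V' * p :=
    calc U * (X * p) * U' = U * (1 - p) * X * (p * U') := by
          rw [← hp.mul_mul_self X, hX]; simp only [mul_assoc]
      _ = X * V' * p := by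
          rw [hUq, hpU', ← hX]; simp only [mul_assoc, hp.mul_self_mul, hV'.eq]
  have hYq : U * (Y * (1 - p)) * U' = V * Y * (1 - p) :=
    calc U * (Y * (1 - p)) * U' = U * p * Y * ((1 - p) * U') := by
          rw [← hq.mul_mul_self, hY]; simp only [mul_assoc]
      _ = V * Y * (1 - p) := by
          rw [hUp, hqU', mul_assoc V, ← hY]; simp only [mul_assoc, hq.eq]
  rw [mul_add, mul_add, mul_one, add_mul, add_mul, hUU', hXp, hYq]

theorem commute_mul_of_anticommute {γ : R} (hX : X * γ = -(γ * X)) (hY : Y * γ = -(γ * Y)) :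
    Commute (X * Y) γ := by
  rw [Commute, SemiconjBy, mul_assoc, hY, mul_neg, ← mul_assoc, hX, neg_mul, neg_neg, mul_assoc]

end Ring

open Complex

section EigenprojI

variable {R : Type*} [Ring R] [Algebra ℂ R] {γ X : R}

noncomputable def eigenprojI (γ : R) : R := (2 : ℂ)⁻¹ • (1 - I • γ)

theorem one_sub_eigenprojI : 1 - eigenprojI γ = (2 : ℂ)⁻¹ • (1 + I • γ) := by
  rw [eigenprojI]; module

theorem isIdempotentElem_eigenprojI (hγ : γ * γ = -1) : IsIdempotentElem (eigenprojI γ) := by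
  have hI : (I • γ) * (I • γ) = 1 := by
    rw [smul_mul_smul_comm, I_mul_I, hγ, neg_smul, one_smul, neg_neg]
  rw [IsIdempotentElem, eigenprojI, smul_mul_smul_comm, mul_sub, sub_mul, sub_mul, hI]
  simp only [mul_one, one_mul]
  module

theorem mul_eigenprojI_of_anticommute (h : X * γ = -(γ * X)) :
    X * eigenprojI γ = (1 - eigenprojI γ) * X := by
  rw [one_sub_eigenprojI, eigenprojI, mul_smul_comm, smul_mul_assoc, mul_sub, add_mul,
    mul_smul_comm, smul_mul_assoc, h]
  simp only [mul_one, one_mul]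
  module

theorem Commute.eigenprojI (h : Commute X γ) : Commute X (eigenprojI γ) :=
  ((Commute.one_right X).sub_right (h.smul_right I)).smul_right _

theorem isSelfAdjoint_eigenprojI [StarRing R] [StarModule ℂ R] (h : star γ = -γ) :
    IsSelfAdjoint (eigenprojI γ) := by
  simp [IsSelfAdjoint, eigenprojI, star_smul, h]

end EigenprojI

section StarRing

variable {R : Type*} [Ring R] [StarRing R] {A B : R}

theorem star_star_mul_eq_neg (hA : star A = A) (hB : star B = -B) (hAB : A * B = B * A) :
    star (star B * A) = -(star B * A) := by
  rw [star_mul, star_star, hA, hB, neg_mul, neg_neg, hAB]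

theorem star_mul_mul_self (hB : star B = -B) (hA2 : A * A = 1) (hB2 : B * B = -1)
    (hAB : A * B = B * A) : star B * A * (star B * A) = -1 := by
  rw [hB, neg_mul, neg_mul_neg, mul_assoc, ← mul_assoc A, hAB, mul_assoc, hA2, mul_one, hB2]

end StarRing

section Rotor

variable {R : Type*} [Ring R] [Algebra ℂ R] {A B J : R}

/-- `rotor J θ = exp (-θ J)` when `J * J = -1`. -/
noncomputable def rotor (J : R) (θ : ℝ) : R := (Real.cos θ : ℂ) • 1 - (Real.sin θ : ℂ) • J

theorem Commute.rotor {γ : R} (h : Commute J γ) (θ : ℝ) : Commute (rotor J θ) γ :=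
  ((Commute.one_left γ).smul_left _).sub_left (h.smul_left _)

variable [StarRing R] [StarModule ℂ R]

theorem star_rotor (θ : ℝ) : star (rotor J θ) = rotor (star J) θ := by
  rw [rotor, rotor, star_sub, star_smul, star_smul, star_one, Complex.star_def, Complex.conj_ofReal,
    Complex.conj_ofReal]

theorem rotor_mul_star_self (hJ : star J = -J) (hJ2 : J * J = -1) (θ : ℝ) :
    rotor J θ * star (rotor J θ) = 1 := by
  have h : (Real.cos θ : ℂ) * Real.cos θ + Real.sin θ * Real.sin θ = 1 := by
    norm_cast; linear_combination Real.cos_sq_add_sin_sq θ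
  rw [star_rotor, hJ, rotor, rotor, sub_mul, mul_sub, mul_sub, smul_mul_smul_comm,
    smul_mul_smul_comm, smul_mul_smul_comm, smul_mul_smul_comm]
  simp only [one_mul, mul_one, mul_neg, hJ2]
  linear_combination (norm := module) h • (1 : R)

theorem mul_star_rotor (hA : star A = A) (hB2 : B * B = -1) (hAB : A * B = B * A) (θ : ℝ) :
    B * star (rotor (star B * A) θ) = (Real.sin θ : ℂ) • A + (Real.cos θ : ℂ) • B := by
  have hBAB : B * (A * B) = -A := by rw [hAB, ← mul_assoc, hB2, neg_one_mul]
  rw [star_rotor, star_mul, star_star, hA, rotor, mul_sub, mul_smul_comm, mul_smul_comm, mul_one,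
    hBAB]
  module

theorem rotor_mul_star (hA : star A = A) (hB : star B = -B) (hB2 : B * B = -1)
    (hAB : A * B = B * A) (θ : ℝ) :
    rotor (star B * A) θ * star B = star ((Real.sin θ : ℂ) • A + (Real.cos θ : ℂ) • B) := by
  have hBAB : B * A * B = -A := by rw [mul_assoc, hAB, ← mul_assoc, hB2, neg_one_mul]
  rw [rotor, star_add, star_smul, star_smul, Complex.star_def, Complex.conj_ofReal,
    Complex.conj_ofReal, hA, hB]
  simp only [sub_mul, smul_mul_assoc, one_mul, neg_mul, mul_neg, neg_neg, hBAB]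
  module

end Rotor

theorem stmt12_general {W : Type*} [NormedAddCommGroup W] [InnerProductSpace ℂ W]
    [FiniteDimensional ℂ W]
    (γ 𝔅 : Module.End ℂ W) (𝔄 : ℝ → Module.End ℂ W)
    (hγ2 : γ * γ = -1) (hγs : LinearMap.adjoint γ = -γ)
    (hAu1 : ∀ t, LinearMap.adjoint (𝔄 t) * 𝔄 t = 1)
    (hA2 : ∀ t, 𝔄 t * 𝔄 t = 1)
    (hBu1 : LinearMap.adjoint 𝔅 * 𝔅 = 1)
    (hB2 : 𝔅 * 𝔅 = -1)
    (hAB : ∀ t, 𝔄 t * 𝔅 = 𝔅 * 𝔄 t)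
    (hAγ : ∀ t, 𝔄 t * γ = -(γ * 𝔄 t)) (hBγ : 𝔅 * γ = -(γ * 𝔅)) (θ : ℝ) :
    let Pip : Module.End ℂ W := (2 : ℂ)⁻¹ • (1 - Complex.I • γ)
    let Pim : Module.End ℂ W := (2 : ℂ)⁻¹ • (1 + Complex.I • γ)
    let P : ℝ → Module.End ℂ W := fun t => (Real.sin t : ℂ) • 𝔄 t + (Real.cos t : ℂ) • 𝔅
    let Pt : ℝ → Module.End ℂ W := fun t =>
      (2 : ℂ)⁻¹ • (1 + P t * Pip + LinearMap.adjoint (P t) * Pim)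
    let U : Module.End ℂ W :=
      ((Real.cos θ : ℂ) • 1 - (Real.sin θ : ℂ) • (LinearMap.adjoint 𝔅 * 𝔄 θ)) * Pip + Pim
    U * Pt 0 * LinearMap.adjoint U = Pt θ := by
  intro Pip Pim P Pt U
  have hPim : Pim = 1 - Pip := one_sub_eigenprojI.symm
  have hPt (t : ℝ) : Pt t = (2 : ℂ)⁻¹ • (1 + P t * Pip + star (P t) * (1 - Pip)) := by
    rw [← hPim]; rfl
  have hP0 : P 0 = 𝔅 := by simp [P]
  set V := rotor (star 𝔅 * 𝔄 θ) θ
  have hU : U = V * Pip + (1 - Pip) := by rw [← hPim]; rfl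
  simp only [← LinearMap.star_eq_adjoint] at hγs hAu1 hBu1 ⊢
  have hA : star (𝔄 θ) = 𝔄 θ := left_inv_eq_right_inv (hAu1 θ) (hA2 θ)
  have hB : star 𝔅 = -𝔅 := left_inv_eq_right_inv hBu1 (by rw [mul_neg, hB2, neg_neg])
  have hBγ' : star 𝔅 * γ = -(γ * star 𝔅) := by rw [hB, neg_mul, mul_neg, hBγ]
  have hp : IsIdempotentElem Pip := isIdempotentElem_eigenprojI hγ2
  have hVstar : Commute (star V) Pip := by
    rw [star_rotor, star_mul, star_star, hA]
    exact ((commute_mul_of_anticommute (hAγ θ) hBγ).rotor θ).eigenprojI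
  have hUstar : star U = star V * Pip + (1 - Pip) := by
    have hPip : star Pip = Pip := (isSelfAdjoint_eigenprojI hγs).star_eq
    rw [hU, star_add, star_mul, star_sub, star_one, hPip, hVstar.eq]
  have hV : V * star V = 1 :=
    rotor_mul_star_self (star_star_mul_eq_neg hA hB (hAB θ))
      (star_mul_mul_self hB (hA2 θ) hB2 (hAB θ)) θ
  rw [hUstar, hU, hPt, hPt, hP0, mul_smul_comm, smul_mul_assoc,
    blockDiag_conj_graph hp hVstar hV (mul_eigenprojI_of_anticommute hBγ)
      (mul_eigenprojI_of_anticommute hBγ'),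
    mul_star_rotor hA hB2 (hAB θ), rotor_mul_star hA hB hB2 (hAB θ)]

/-- On `W = W₊ ⊕ W₋`, the `±i`-eigenspace decomposition of `γ`
(eigenprojections `Π₊ = (Id - iγ)/2`, `Π₋ = (Id + iγ)/2`), let `𝔄(θ)`, `𝔅` be unitary
with `𝔄(θ)² = Id`, `𝔅² = -Id`, `𝔄(θ)𝔅 = 𝔅𝔄(θ)`, both anticommuting with `γ`.
Set `P(θ) = 𝔄(θ) sin θ + 𝔅 cos θ` (so `P(0) = 𝔅`), and let
`P̃(θ) = (1/2)[[Id, P(θ)*],[P(θ), Id]] = (1/2)(Id + P(θ)Π₊ + P(θ)*Π₋)` be the projection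
onto the graph of `P(θ)`, and `U(θ) = [[cos θ · Id - 𝔅*𝔄(θ) sin θ, 0],[0, Id]]
= (cos θ · Id - 𝔅*𝔄(θ) sin θ)Π₊ + Π₋`. Then `U(θ) P̃(0) U(θ)* = P̃(θ)`. -/
theorem stmt12 {W : Type*} [NormedAddCommGroup W] [InnerProductSpace ℂ W]
    [FiniteDimensional ℂ W]
    (γ 𝔅 : Module.End ℂ W) (𝔄 : ℝ → Module.End ℂ W)
    (hγ2 : γ * γ = -1) (hγs : LinearMap.adjoint γ = -γ)
    (hAu1 : ∀ t, LinearMap.adjoint (𝔄 t) * 𝔄 t = 1)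
    (hAu2 : ∀ t, 𝔄 t * LinearMap.adjoint (𝔄 t) = 1)
    (hA2 : ∀ t, 𝔄 t * 𝔄 t = 1)
    (hBu1 : LinearMap.adjoint 𝔅 * 𝔅 = 1) (hBu2 : 𝔅 * LinearMap.adjoint 𝔅 = 1)
    (hB2 : 𝔅 * 𝔅 = -1)
    (hAB : ∀ t, 𝔄 t * 𝔅 = 𝔅 * 𝔄 t)
    (hAγ : ∀ t, 𝔄 t * γ = -(γ * 𝔄 t)) (hBγ : 𝔅 * γ = -(γ * 𝔅)) (θ : ℝ) :
    let Pip : Module.End ℂ W := (2 : ℂ)⁻¹ • (1 - Complex.I • γ)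
    let Pim : Module.End ℂ W := (2 : ℂ)⁻¹ • (1 + Complex.I • γ)
    let P : ℝ → Module.End ℂ W := fun t => (Real.sin t : ℂ) • 𝔄 t + (Real.cos t : ℂ) • 𝔅
    let Pt : ℝ → Module.End ℂ W := fun t =>
      (2 : ℂ)⁻¹ • (1 + P t * Pip + LinearMap.adjoint (P t) * Pim)
    let U : Module.End ℂ W :=
      ((Real.cos θ : ℂ) • 1 - (Real.sin θ : ℂ) • (LinearMap.adjoint 𝔅 * 𝔄 θ)) * Pip + Pim
    U * Pt 0 * LinearMap.adjoint U = Pt θ :=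
  stmt12_general γ 𝔅 𝔄 hγ2 hγs hAu1 hA2 hBu1 hB2 hAB hAγ hBγ θ
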